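/- Let X be a subshift over a finite alphabet A ⊆ ℤ, let v ∈ ℤ² be nonzero, and let u ∈ ℤ² be nonzero with ⟨u, v⟩ = 0. Let k > |⟨u^⊥, v⟩| be such that the box B = B_u^k determines cell 0 in X, i.e., for all d, e ∈ X, d|_B = e|_B implies d(0) = e(0). Let c₁, …, c_n ∈ X be pairwise distinct with τ^v(c₁) − c₁ = ⋯ = τ^v(c_n) − c_n, and suppose n₁ < n₂ < ⋯ are natural numbers such that for each i ∈ {1,…,n} the limit d_i = lim_{j→∞} τ^{n_j · u}(c_i) exists in the product topology. Then: (a) τ^v(d₁) − d₁ = ⋯ = τ^v(d_n) − d_n, and (b) for every t ∈ ℤ², the restrictions d₁|_{B−t}, …, d_n|_{B−t} to the translated box B − t are pairwise distinct. -/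

import Mathlib

/-- Translation of a configuration by `t`: `(Translate t c) n = c (n - t)`. -/
def Translate {A : Type*} (t : ℤ × ℤ) (c : ℤ × ℤ → A) : ℤ × ℤ → A :=
  fun n => c (n - t)

/-- The orbit of a configuration: the set of all its translates. -/
def orbit {A : Type*} (c : ℤ × ℤ → A) : Set (ℤ × ℤ → A) :=
  { d | ∃ t : ℤ × ℤ, d = Translate t c }

/-- The orbit closure: the topological closure of the orbit (in the product
topology of the discrete topology on the alphabet). -/
def orbitClosure {A : Type*} [TopologicalSpace A] (c : ℤ × ℤ → A) : Set (ℤ × ℤ → A) :=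
  closure (orbit c)

/-- The standard inner product on `ℤ²`. -/
def inner2 (x u : ℤ × ℤ) : ℤ := x.1 * u.1 + x.2 * u.2

/-- The discrete half plane in direction `u`. -/
def halfPlane (u : ℤ × ℤ) : Set (ℤ × ℤ) := { x | inner2 x u < 0 }

/-- A set of configurations is deterministic in direction `u`: the contents of a
configuration on the half plane `H_u` determine the whole configuration. -/
def DeterministicIn {A : Type*} (X : Set (ℤ × ℤ → A)) (u : ℤ × ℤ) : Prop :=
  ∀ d ∈ X, ∀ e ∈ X, Set.EqOn d e (halfPlane u) → d = e

/-- The set of `D`-patterns appearing in `c` : restrictions of translates of `c` to `D`. -/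
def patterns {A : Type*} (c : ℤ × ℤ → A) (D : Set (ℤ × ℤ)) : Set (D → A) :=
  { p | ∃ t : ℤ × ℤ, ∀ x : D, p x = Translate t c x }

/-- A configuration is periodic if it is fixed by some non-trivial translation. -/
def Periodic {A : Type*} (c : ℤ × ℤ → A) : Prop :=
  ∃ t : ℤ × ℤ, t ≠ 0 ∧ Translate t c = c

/-- The discrete rectangle `{1,…,n} × {1,…,m}`. -/
def rect (n m : ℕ) : Set (ℤ × ℤ) :=
  { x | 1 ≤ x.1 ∧ x.1 ≤ (n : ℤ) ∧ 1 ≤ x.2 ∧ x.2 ≤ (m : ℤ) }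

/-- The difference operator `τ^v - id`, corresponding to multiplication by the
Laurent polynomial `x^v - 1`. -/
def diffOp (v : ℤ × ℤ) (d : ℤ × ℤ → ℤ) : ℤ × ℤ → ℤ := fun n => d (n - v) - d n

/-- Perpendicular vector: `(n,m)^⊥ = (m,−n)`. -/
def perp (u : ℤ × ℤ) : ℤ × ℤ := (u.2, -u.1)

/-- The discrete box `B_u^k`. -/
def Box (u : ℤ × ℤ) (k : ℤ) : Set (ℤ × ℤ) :=
  { x | -k < inner2 x u ∧ inner2 x u < 0 ∧ -k < inner2 x (perp u) ∧ inner2 x (perp u) < k }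

/-- A subshift: a set of configurations closed in the product topology and closed
under translations. -/
def IsSubshift {A : Type*} [TopologicalSpace A] (X : Set (ℤ × ℤ → A)) : Prop :=
  IsClosed X ∧ ∀ c ∈ X, ∀ t : ℤ × ℤ, Translate t c ∈ X

/-
Two configurations whose difference is `v`-periodic and which agree on a window of height `k` in the
`u`-direction and width `|⟨v, u^⊥⟩|` across it agree on the whole slab of height `k` (periodicity), hence on
the whole half plane above that slab (the box `B_u^k` determines cell `0`, and `X` is translation
invariant). If the `d_i` (whose differences are `v`-periodic by (a)) agreed on `B − t`, they would agree on
such a window `W`; pointwise convergence on the finite set `W` makes `τ^{n_j u} c_i` and `τ^{n_j u} c_j`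
agree on `W` for large `j`, hence above `W`, while `c_i ≠ c_j` at some `p` and `p + n_j u` lies above `W`
for large `j`.
-/

lemma inner2_add (x y w : ℤ × ℤ) : inner2 (x + y) w = inner2 x w + inner2 y w := by
  simp only [inner2, Prod.fst_add, Prod.snd_add]; ring

lemma inner2_sub (x y w : ℤ × ℤ) : inner2 (x - y) w = inner2 x w - inner2 y w := by
  simp only [inner2, Prod.fst_sub, Prod.snd_sub]; ring

lemma inner2_zsmul (m : ℤ) (x w : ℤ × ℤ) : inner2 (m • x) w = m * inner2 x w := by
  simp only [inner2, Prod.smul_fst, Prod.smul_snd, smul_eq_mul]; ring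

lemma inner2_comm (x y : ℤ × ℤ) : inner2 x y = inner2 y x := by
  simp only [inner2]; ring

lemma inner2_self_pos {u : ℤ × ℤ} (hu : u ≠ 0) : 0 < inner2 u u := by
  have : u.1 ≠ 0 ∨ u.2 ≠ 0 := by
    contrapose! hu
    exact Prod.ext hu.1 hu.2
  simp only [inner2]
  rcases this with h | h <;> nlinarith [mul_self_pos.mpr h, mul_self_nonneg u.1, mul_self_nonneg u.2]

lemma eq_zero_of_inner2_eq_zero {u x : ℤ × ℤ} (hu : u ≠ 0) (h : inner2 x u = 0)
    (h' : inner2 x (perp u) = 0) : x = 0 := by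
  have hq := (inner2_self_pos hu).ne'
  simp only [inner2, perp] at h h' hq
  have h₁ : x.1 * (u.1 * u.1 + u.2 * u.2) = 0 := by linear_combination u.1 * h + u.2 * h'
  have h₂ : x.2 * (u.1 * u.1 + u.2 * u.2) = 0 := by linear_combination u.2 * h - u.1 * h'
  exact Prod.ext ((mul_eq_zero.mp h₁).resolve_right hq) ((mul_eq_zero.mp h₂).resolve_right hq)

lemma inner2_perp_injective {u : ℤ × ℤ} (hu : u ≠ 0) :
    Function.Injective fun x => (inner2 x u, inner2 x (perp u)) := fun x y hxy => by
  simp only [Prod.mk.injEq] at hxy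
  exact sub_eq_zero.mp <| eq_zero_of_inner2_eq_zero hu (by rw [inner2_sub, hxy.1, sub_self])
    (by rw [inner2_sub, hxy.2, sub_self])

lemma inner2_perp_ne_zero {u v : ℤ × ℤ} (hu : u ≠ 0) (hv : v ≠ 0) (huv : inner2 u v = 0) :
    inner2 v (perp u) ≠ 0 :=
  fun h => hv (eq_zero_of_inner2_eq_zero hu (by rwa [inner2_comm]) h)

lemma exists_inner2_add_zsmul_mem_Ico {v w : ℤ × ℤ} (hσ : inner2 v w ≠ 0) (x : ℤ × ℤ) (b : ℤ) :
    ∃ m : ℤ, inner2 (x + m • v) w ∈ Set.Ico b (b + |inner2 v w|) := by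
  refine ⟨-((inner2 x w - b) / inner2 v w), ?_⟩
  have hmod := Int.emod_def (inner2 x w - b) (inner2 v w)
  have hlt := Int.emod_lt (inner2 x w - b) hσ
  have hnn := Int.emod_nonneg (inner2 x w - b) hσ
  rw [Int.natCast_natAbs] at hlt
  rw [inner2_add, inner2_zsmul, Set.mem_Ico]
  constructor <;> linarith

def window (u : ℤ × ℤ) (a h b w : ℤ) : Set (ℤ × ℤ) :=
  {x | inner2 x u ∈ Set.Ioo a (a + h) ∧ inner2 x (perp u) ∈ Set.Ico b (b + w)}

lemma window_finite {u : ℤ × ℤ} (hu : u ≠ 0) (a h b w : ℤ) : (window u a h b w).Finite :=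
  ((Set.finite_Ioo a (a + h)).prod (Set.finite_Ico b (b + w))).preimage
    (inner2_perp_injective hu).injOn

lemma diffOp_translate (v t : ℤ × ℤ) (c : ℤ × ℤ → ℤ) :
    diffOp v (Translate t c) = Translate t (diffOp v c) := by
  funext n
  simp only [diffOp, Translate, sub_right_comm]

lemma continuous_diffOp (v : ℤ × ℤ) : Continuous (diffOp v) :=
  continuous_pi fun n => (continuous_apply (n - v)).sub (continuous_apply n)

lemma diffOp_eq_of_tendsto {ι : Type*} {l : Filter ι} [l.NeBot] {f g : ι → ℤ × ℤ → ℤ}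
    {d e : ℤ × ℤ → ℤ} {v : ℤ × ℤ} (hf : Filter.Tendsto f l (nhds d))
    (hg : Filter.Tendsto g l (nhds e)) (h : ∀ J, diffOp v (f J) = diffOp v (g J)) :
    diffOp v d = diffOp v e := by
  refine tendsto_nhds_unique ((continuous_diffOp v).tendsto d |>.comp hf) ?_
  simpa only [Function.comp_def, h] using (continuous_diffOp v).tendsto e |>.comp hg

lemma periodic_sub_of_diffOp_eq {v : ℤ × ℤ} {c c' : ℤ × ℤ → ℤ}
    (h : diffOp v c = diffOp v c') : Function.Periodic (c - c') v := fun x => by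
  have := congrFun h (x + v)
  simp only [diffOp, add_sub_cancel_right] at this
  simp only [Pi.sub_apply]
  linarith

lemma eventually_eqOn_of_tendsto {ι β α : Type*} [TopologicalSpace α] [DiscreteTopology α]
    {l : Filter ι} {f : ι → β → α} {d : β → α} (hf : Filter.Tendsto f l (nhds d))
    {W : Set β} (hW : W.Finite) : ∀ᶠ J in l, Set.EqOn (f J) d W :=
  (Filter.eventually_all_finite hW).mpr fun x _ =>
    Filter.tendsto_pure.mp (by simpa only [nhds_discrete] using tendsto_pi_nhds.mp hf x)

section Determinism

variable {α : Type*} {X : Set (ℤ × ℤ → α)} {u : ℤ × ℤ} {k : ℤ}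
  (hX : ∀ c ∈ X, ∀ t, Translate t c ∈ X)
  (hdet : ∀ d ∈ X, ∀ e ∈ X, Set.EqOn d e (Box u k) → d 0 = e 0)
  {d e : ℤ × ℤ → α} (hd : d ∈ X) (he : e ∈ X)
include hX hdet hd he

lemma apply_eq_of_eqOn_slab (x : ℤ × ℤ)
    (H : ∀ y, inner2 x u - k < inner2 y u → inner2 y u < inner2 x u → d y = e y) : d x = e x := by
  have := hdet _ (hX d hd (-x)) _ (hX e he (-x)) fun y ⟨hy₁, hy₂, _⟩ => by
    simp only [Translate, sub_neg_eq_add]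
    exact H (y + x) (by rw [inner2_add]; omega) (by rw [inner2_add]; omega)
  simpa only [Translate, zero_sub, neg_neg] using this

lemma eqOn_halfPlane_of_eqOn_slab (a : ℤ)
    (H : ∀ x, a < inner2 x u → inner2 x u < a + k → d x = e x) :
    ∀ x, a < inner2 x u → d x = e x := by
  suffices h : ∀ n : ℕ, ∀ x, a < inner2 x u → inner2 x u < a + k + n → d x = e x from
    fun x hx => h (inner2 x u - a - k + 1).toNat x hx (by omega)
  intro n
  induction n with
  | zero => simpa using H
  | succ n ih =>
    intro x hx₁ hx₂
    by_cases hlt : inner2 x u < a + k + n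
    · exact ih x hx₁ hlt
    · exact apply_eq_of_eqOn_slab hX hdet hd he x fun y hy₁ hy₂ =>
        ih y (by omega) (by push_cast at hx₂; omega)

variable [AddGroup α] {v : ℤ × ℤ}

lemma eqOn_halfPlane_of_eqOn_window (hp : Function.Periodic (d - e) v)
    (hvu : inner2 v u = 0) (hσ : inner2 v (perp u) ≠ 0) (a b : ℤ)
    (H : Set.EqOn d e (window u a k b |inner2 v (perp u)|)) :
    ∀ x, a < inner2 x u → d x = e x := by
  refine eqOn_halfPlane_of_eqOn_slab hX hdet hd he a fun x hx₁ hx₂ => ?_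
  obtain ⟨m, hm⟩ := exists_inner2_add_zsmul_mem_Ico hσ x b
  have hxm : d (x + m • v) = e (x + m • v) :=
    H ⟨by rw [inner2_add, inner2_zsmul, hvu, mul_zero, add_zero]; exact ⟨hx₁, hx₂⟩, hm⟩
  have := hp.zsmul m x
  simp only [Pi.sub_apply, hxm, sub_self] at this
  exact sub_eq_zero.mp this.symm

end Determinism

theorem exists_ne_on_box_of_tendsto_translate {X : Set (ℤ × ℤ → ℤ)} (hX : IsSubshift X)
    {u v : ℤ × ℤ} {k : ℤ} (hdet : ∀ d ∈ X, ∀ e ∈ X, Set.EqOn d e (Box u k) → d 0 = e 0)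
    (hu : u ≠ 0) (hvu : inner2 v u = 0) (hσ : inner2 v (perp u) ≠ 0)
    (hk : |inner2 v (perp u)| < k) {c c' d d' : ℤ × ℤ → ℤ} (hc : c ∈ X) (hc' : c' ∈ X)
    (hne : c ≠ c') (hcp : Function.Periodic (c - c') v) (hdp : Function.Periodic (d - d') v)
    {ι : Type*} {l : Filter ι} [l.NeBot] {ts : ι → ℤ × ℤ}
    (hts : Filter.Tendsto (fun J => inner2 (ts J) u) l Filter.atTop)
    (hd : Filter.Tendsto (fun J => Translate (ts J) c) l (nhds d))
    (hd' : Filter.Tendsto (fun J => Translate (ts J) c') l (nhds d')) (t : ℤ × ℤ) :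
    ∃ x, x + t ∈ Box u k ∧ d x ≠ d' x := by
  by_contra! hbox
  set L := -inner2 t u - k
  have hdX := hX.1.mem_of_tendsto hd (.of_forall fun J => hX.2 c hc (ts J))
  have hd'X := hX.1.mem_of_tendsto hd' (.of_forall fun J => hX.2 c' hc' (ts J))
  have habove : ∀ x, L < inner2 x u → d x = d' x :=
    eqOn_halfPlane_of_eqOn_window hX.2 hdet hdX hd'X hdp hvu hσ L (1 - k - inner2 t (perp u))
      fun x ⟨⟨hx₁, hx₂⟩, hx₃, hx₄⟩ => hbox x <| by
        simp only [Box, Set.mem_ofPred_eq, inner2_add]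
        have := abs_nonneg (inner2 v (perp u))
        omega
  set W := window u L k 0 |inner2 v (perp u)|
  have hW : ∀ᶠ J in l, Set.EqOn (Translate (ts J) c) (Translate (ts J) c') W :=
    ((eventually_eqOn_of_tendsto hd (window_finite hu _ _ _ _)).and
      (eventually_eqOn_of_tendsto hd' (window_finite hu _ _ _ _))).mono
      fun J ⟨h, h'⟩ x hx => (h hx).trans ((habove x hx.1.1).trans (h' hx).symm)
  obtain ⟨p, hp⟩ := Function.ne_iff.mp hne
  have hpJ : ∀ᶠ J in l, L < inner2 (p + ts J) u :=
    (hts.eventually_gt_atTop (L - inner2 p u)).mono fun J hJ => by rw [inner2_add]; omega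
  obtain ⟨J, hJW, hJp⟩ := (hW.and hpJ).exists
  apply hp
  simpa only [Translate, add_sub_cancel_right] using
    eqOn_halfPlane_of_eqOn_window hX.2 hdet (hX.2 c hc (ts J)) (hX.2 c' hc' (ts J))
      (hcp.sub_const (ts J)) hvu hσ L 0 hJW (p + ts J) hJp

theorem limit_configurations_properties_general
    (X : Set (ℤ × ℤ → ℤ)) (hX : IsSubshift X)
    (v : ℤ × ℤ) (hv : v ≠ 0) (u : ℤ × ℤ) (hu : u ≠ 0) (huv : inner2 u v = 0)
    (k : ℤ) (hk : |inner2 (perp u) v| < k)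
    (hdet : ∀ d ∈ X, ∀ e ∈ X, Set.EqOn d e (Box u k) → d 0 = e 0)
    (N : ℕ) (cs : Fin N → (ℤ × ℤ → ℤ)) (hcs : ∀ i, cs i ∈ X)
    (hinj : Function.Injective cs)
    (hdiff : ∀ i j, diffOp v (cs i) = diffOp v (cs j))
    (ns : ℕ → ℕ) (hns : StrictMono ns)
    (ds : Fin N → (ℤ × ℤ → ℤ))
    (hlim : ∀ i, Filter.Tendsto (fun j => Translate ((ns j : ℤ) • u) (cs i))
      Filter.atTop (nhds (ds i))) :
    (∀ i j, diffOp v (ds i) = diffOp v (ds j)) ∧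
    ∀ t : ℤ × ℤ, ∀ i j, i ≠ j → ∃ x : ℤ × ℤ, x + t ∈ Box u k ∧ ds i x ≠ ds j x := by
  have hdiff_lim : ∀ i j, diffOp v (ds i) = diffOp v (ds j) := fun i j =>
    diffOp_eq_of_tendsto (hlim i) (hlim j) fun J => by
      rw [diffOp_translate, diffOp_translate, hdiff i j]
  have hns_u : Filter.Tendsto (fun j => inner2 ((ns j : ℤ) • u) u) Filter.atTop Filter.atTop := by
    simp only [inner2_zsmul]
    exact ((tendsto_natCast_atTop_atTop (R := ℤ)).comp hns.tendsto_atTop).atTop_mul_const'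
      (inner2_self_pos hu)
  exact ⟨hdiff_lim, fun t i j hij =>
    exists_ne_on_box_of_tendsto_translate hX hdet hu (by rwa [inner2_comm])
      (inner2_perp_ne_zero hu hv huv) (by rwa [inner2_comm]) (hcs i) (hcs j) (hinj.ne hij)
      (periodic_sub_of_diffOp_eq (hdiff i j)) (periodic_sub_of_diffOp_eq (hdiff_lim i j))
      hns_u (hlim i) (hlim j) t⟩

/-- In the setting of the determinism box: if `c₁, …, c_N ∈ X` are
pairwise distinct with equal images under `τ^v − id`, and along a strictly
increasing sequence `n₁ < n₂ < ⋯` the limits `d_i = lim_j τ^{n_j·u}(c_i)` exist,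
then (a) the `d_i` have equal images under `τ^v − id`, and (b) for every `t ∈ ℤ²`
the restrictions of the `d_i` to the translated box `B − t` are pairwise distinct. -/
theorem limit_configurations_properties
    (A : Finset ℤ) (X : Set (ℤ × ℤ → ℤ)) (hX : IsSubshift X)
    (hA : ∀ c ∈ X, ∀ n : ℤ × ℤ, c n ∈ A)
    (v : ℤ × ℤ) (hv : v ≠ 0) (u : ℤ × ℤ) (hu : u ≠ 0) (huv : inner2 u v = 0)
    (k : ℤ) (hk : |inner2 (perp u) v| < k)
    (hdet : ∀ d ∈ X, ∀ e ∈ X, Set.EqOn d e (Box u k) → d 0 = e 0)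
    (N : ℕ) (cs : Fin N → (ℤ × ℤ → ℤ)) (hcs : ∀ i, cs i ∈ X)
    (hinj : Function.Injective cs)
    (hdiff : ∀ i j, diffOp v (cs i) = diffOp v (cs j))
    (ns : ℕ → ℕ) (hns : StrictMono ns)
    (ds : Fin N → (ℤ × ℤ → ℤ))
    (hlim : ∀ i, Filter.Tendsto (fun j => Translate ((ns j : ℤ) • u) (cs i))
      Filter.atTop (nhds (ds i))) :
    (∀ i j, diffOp v (ds i) = diffOp v (ds j)) ∧
    ∀ t : ℤ × ℤ, ∀ i j, i ≠ j → ∃ x : ℤ × ℤ, x + t ∈ Box u k ∧ ds i x ≠ ds j x :=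
  limit_configurations_properties_general X hX v hv u hu huv k hk hdet N cs hcs hinj hdiff ns hns ds
    hlim
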